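/- Let 𝒜 be an abelian category that is either Ext^1-small and (Ab.4), or Hom-finite and Ext^1-finite. For an object V of 𝒜 the following are equivalent: (1) V is a tilting object; (2) Gen(V) = V^{⊥1}; (3) V has projective dimension ≤ 1, Ext^1(V, V^{(I)}) = 0 for all sets I for which the coproduct exists (in the Hom-finite case the single condition Ext^1(V,V) = 0 suffices), and the only object A with Hom(V,A) = 0 = Ext^1(V,A) is A = 0. -/

import Mathlib

/-!
Common definitions for formalizing results of "Tilting preenvelopes and cotilting
precovers in general Abelian categories" (Parra–Saorín–Virili).

Conventions:
* Full subcategories of an abelian category `C` are encoded as `Set C`.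
* "Sets" (index sets of families, coproducts, …) are encoded as types in the universe `v`
  of the morphisms of `C`.
* `Ext¹(X,Y) = 0` is encoded via the splitting of all short exact sequences
  `0 → Y → E → X → 0` (equivalently, the vanishing of the Yoneda Ext group).
* Relative (`…In B`) notions encode the corresponding notion computed inside the
  full (abelian exact) subcategory determined by `B : Set C`; the ambient case is
  `B = Set.univ`.
* Coproducts are not assumed to exist: a coproduct of a family existing in the
  (sub)category is encoded by a cocone with the universal property (`IsCoproductIn`).
-/

open CategoryTheory CategoryTheory.Limits

universe w v u

attribute [local instance] CategoryTheory.Abelian.hasFiniteBiproducts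

namespace Paper

variable {C : Type u} [Category.{v} C] [Abelian C]

/-- `(i, p)` is a short exact sequence `0 ⟶ A ⟶ E ⟶ B ⟶ 0` in `C`. -/
def IsShortExact {A E B : C} (i : A ⟶ E) (p : E ⟶ B) : Prop :=
  ∃ hw : i ≫ p = 0, (ShortComplex.mk i p hw).ShortExact

/-- `Q`, together with the injections `ι`, is the coproduct of the family `f`
inside the full subcategory determined by `B`. -/
structure IsCoproductIn (B : Set C) {I : Type v} (f : I → C) (Q : C)
    (ι : ∀ i, f i ⟶ Q) : Prop where
  mem : ∀ i, f i ∈ B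
  memQ : Q ∈ B
  desc : ∀ Z ∈ B, ∀ g : (∀ i, f i ⟶ Z), ∃! h : Q ⟶ Z, ∀ i, ι i ≫ h = g i

/-- `Ext¹(X, Y) = 0`, computed in the full subcategory determined by `B`:
every short exact sequence `0 → Y → E → X → 0` with `E ∈ B` splits. -/
def Ext1ZeroIn (B : Set C) (X Y : C) : Prop :=
  ∀ E ∈ B, ∀ (i : Y ⟶ E) (p : E ⟶ X), IsShortExact i p → ∃ r : E ⟶ Y, i ≫ r = 𝟙 Y

/-- `Ext¹(X, Y) = 0` in the ambient abelian category. -/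
def Ext1Zero (X Y : C) : Prop := Ext1ZeroIn Set.univ X Y

/-- `V^{⊥₁}`, computed in (the full subcategory determined by) `B`. -/
def rightPerp (B : Set C) (V : C) : Set C := {A ∈ B | Ext1ZeroIn B V A}

/-- `^{⊥₁}T`, computed in `B`. -/
def leftPerpSet (B T : Set C) : Set C := {A ∈ B | ∀ X ∈ T, Ext1ZeroIn B A X}

/-- `T^{⊥₁}`, computed in `B`. -/
def rightPerpSet (B T : Set C) : Set C := {A ∈ B | ∀ X ∈ T, Ext1ZeroIn B X A}

/-- `Sub(X)` relative to `B`: objects of `B` admitting a monomorphism into an object of `X`. -/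
def subIn (B X : Set C) : Set C := {A ∈ B | ∃ T ∈ X, ∃ f : A ⟶ T, Mono f}

/-- `Quot(X)` relative to `B`: objects of `B` which are epimorphic images of objects of `X`. -/
def quotIn (B X : Set C) : Set C := {A ∈ B | ∃ T ∈ X, ∃ f : T ⟶ A, Epi f}

/-- `(T, F)` is a torsion pair in (the full subcategory determined by) `B`. -/
structure IsTorsionPairIn (B T F : Set C) : Prop where
  eqF : F = {A ∈ B | ∀ X ∈ T, ∀ f : X ⟶ A, f = 0}
  eqT : T = {A ∈ B | ∀ Y ∈ F, ∀ f : A ⟶ Y, f = 0}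
  seq : ∀ A ∈ B, ∃ (X Y : C) (i : X ⟶ A) (p : A ⟶ Y), X ∈ T ∧ Y ∈ F ∧ IsShortExact i p

/-- `T` is a torsion class in `B`. -/
def IsTorsionClassIn (B T : Set C) : Prop := ∃ F, IsTorsionPairIn B T F

/-- `F` is a torsion-free class in `B`. -/
def IsTorsionFreeClassIn (B F : Set C) : Prop := ∃ T, IsTorsionPairIn B T F

/-- `φ : M ⟶ X` is a `T`-preenvelope. -/
structure IsPreenvelope (T : Set C) {M X : C} (φ : M ⟶ X) : Prop where
  mem : X ∈ T
  fac : ∀ T' ∈ T, ∀ g : M ⟶ T', ∃ h : X ⟶ T', φ ≫ h = g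

/-- `φ` is a semi-special `T`-preenvelope (relative to `B`):
a `T`-preenvelope whose cokernel lies in `^{⊥₁}T` (computed in `B`). -/
def IsSemiSpecialPreenvelopeIn (B T : Set C) {M X : C} (φ : M ⟶ X) : Prop :=
  IsPreenvelope T φ ∧ cokernel φ ∈ leftPerpSet B T

/-- `φ` is a special `T`-preenvelope (relative to `B`). -/
def IsSpecialPreenvelopeIn (B T : Set C) {M X : C} (φ : M ⟶ X) : Prop :=
  Mono φ ∧ IsSemiSpecialPreenvelopeIn B T φ

/-- `T` is preenveloping in `B`. -/
def PreenvelopingIn (B T : Set C) : Prop :=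
  ∀ M ∈ B, ∃ (X : C) (φ : M ⟶ X), IsPreenvelope T φ

/-- `T` is semi-special preenveloping in `B`. -/
def SemiSpecialPreenvelopingIn (B T : Set C) : Prop :=
  ∀ M ∈ B, ∃ (X : C) (φ : M ⟶ X), IsSemiSpecialPreenvelopeIn B T φ

/-- `T` is special preenveloping in `B`. -/
def SpecialPreenvelopingIn (B T : Set C) : Prop :=
  ∀ M ∈ B, ∃ (X : C) (φ : M ⟶ X), IsSpecialPreenvelopeIn B T φ

/-- `φ : X ⟶ M` is a `T`-precover. -/
structure IsPrecover (T : Set C) {X M : C} (φ : X ⟶ M) : Prop where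
  mem : X ∈ T
  fac : ∀ T' ∈ T, ∀ g : T' ⟶ M, ∃ h : T' ⟶ X, h ≫ φ = g

/-- `φ` is a semi-special `T`-precover (relative to `B`):
a `T`-precover whose kernel lies in `T^{⊥₁}` (computed in `B`). -/
def IsSemiSpecialPrecoverIn (B T : Set C) {X M : C} (φ : X ⟶ M) : Prop :=
  IsPrecover T φ ∧ kernel φ ∈ rightPerpSet B T

/-- `T` is precovering in `B`. -/
def PrecoveringIn (B T : Set C) : Prop :=
  ∀ M ∈ B, ∃ (X : C) (φ : X ⟶ M), IsPrecover T φ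

/-- `T` is semi-special precovering in `B`. -/
def SemiSpecialPrecoveringIn (B T : Set C) : Prop :=
  ∀ M ∈ B, ∃ (X : C) (φ : X ⟶ M), IsSemiSpecialPrecoverIn B T φ

/-- `Add(V)` relative to `B`: direct summands of coproducts (existing in `B`)
of copies of `V`. -/
def addIn (B : Set C) (V : C) : Set C :=
  {A ∈ B | ∃ (I : Type v) (Q : C) (ι : ∀ _ : I, V ⟶ Q),
     IsCoproductIn B (fun _ : I => V) Q ι ∧ ∃ (s : A ⟶ Q) (r : Q ⟶ A), s ≫ r = 𝟙 A}

/-- `Gen(V)` relative to `B`: quotients of objects of `Add(V)`. -/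
def genIn (B : Set C) (V : C) : Set C :=
  {A ∈ B | ∃ X ∈ addIn B V, ∃ p : X ⟶ A, Epi p}

/-- `Pres(V)` relative to `B`: cokernels of morphisms between objects of `Add(V)`. -/
def presIn (B : Set C) (V : C) : Set C :=
  {A ∈ B | ∃ X ∈ addIn B V, ∃ Y ∈ addIn B V,
     ∃ (f : X ⟶ Y) (c : Y ⟶ A) (hw : f ≫ c = 0), Epi c ∧ (ShortComplex.mk f c hw).Exact}

/-- `Ḡen(V) = Sub(Gen(V))` relative to `B`. -/
def barGenIn (B : Set C) (V : C) : Set C := subIn B (genIn B V)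

/-- The class `X` is cogenerating in `B`. -/
def CogeneratingIn (B X : Set C) : Prop := ∀ A ∈ B, ∃ T ∈ X, ∃ f : A ⟶ T, Mono f

/-- The class `X` is generating in `B`. -/
def GeneratingIn (B X : Set C) : Prop := ∀ A ∈ B, ∃ T ∈ X, ∃ f : T ⟶ A, Epi f

/-- `V` is a quasi-tilting object of (the full subcategory determined by) `B`:
`Gen(V)` is a torsion class and `Gen(V) = Pres(V) = Ḡen(V) ∩ V^{⊥₁}`. -/
def IsQuasiTiltingIn (B : Set C) (V : C) : Prop :=
  V ∈ B ∧ IsTorsionClassIn B (genIn B V) ∧ genIn B V = presIn B V ∧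
    genIn B V = barGenIn B V ∩ rightPerp B V

/-- `V` is a tilting object of `B`: quasi-tilting with `Gen(V)` cogenerating. -/
def IsTiltingIn (B : Set C) (V : C) : Prop :=
  IsQuasiTiltingIn B V ∧ CogeneratingIn B (genIn B V)

/-- `G` is an epi-generator of `B`: every object of `B` is an epimorphic image of a
coproduct (existing in `B`) of copies of `G`. -/
def IsEpiGeneratorIn (B : Set C) (G : C) : Prop :=
  G ∈ B ∧ ∀ A ∈ B, ∃ (I : Type v) (Q : C) (ι : ∀ _ : I, G ⟶ Q),
    IsCoproductIn B (fun _ : I => G) Q ι ∧ ∃ p : Q ⟶ A, Epi p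

/-- `0 → A —u→ X → V^{(J)} → 0` is a universal extension of `V` by `A` (relative to `B`):
the right end of the sequence is a nonempty coproduct of copies of `V` existing in `B`,
and the induced map `Ext¹(V,A) → Ext¹(V,X)` is zero (encoded: for every extension
`0 → A —i→ E → V → 0` with `E ∈ B`, its pushout along `u` splits, i.e. `u` extends
along `i`). -/
def IsUniversalExtensionIn (B : Set C) (V A X : C) (u : A ⟶ X) : Prop :=
  A ∈ B ∧ X ∈ B ∧
  (∃ (J : Type v) (_ : Nonempty J) (P : C) (κ : ∀ _ : J, V ⟶ P) (p : X ⟶ P),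
     IsCoproductIn B (fun _ : J => V) P κ ∧ IsShortExact u p) ∧
  (∀ E ∈ B, ∀ (i : A ⟶ E) (q : E ⟶ V), IsShortExact i q → ∃ ψ : E ⟶ X, i ≫ ψ = u)

/-- `V` is `Ext¹`-universal in `B`: universal extensions of `V` by every object exist. -/
def IsExt1UniversalIn (B : Set C) (V : C) : Prop :=
  ∀ A ∈ B, ∃ (X : C) (u : A ⟶ X), IsUniversalExtensionIn B V A X u

/-- `(X, Y)` is a cotorsion pair in (the full subcategory determined by) `B`. -/
def IsCotorsionPairIn (B X Y : Set C) : Prop :=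
  Y = {A ∈ B | ∀ Z ∈ X, Ext1ZeroIn B Z A} ∧
  X = {A ∈ B | ∀ Z ∈ Y, Ext1ZeroIn B A Z}

/-- The pair `(X, Y)` is right complete in `B`: every `A ∈ B` admits a short exact
sequence `0 → A → Y' → X' → 0` with `Y' ∈ Y`, `X' ∈ X`. -/
def RightCompleteIn (B X Y : Set C) : Prop :=
  ∀ A ∈ B, ∃ (Y' X' : C) (i : A ⟶ Y') (p : Y' ⟶ X'), Y' ∈ Y ∧ X' ∈ X ∧ IsShortExact i p

/-- The pair `(X, Y)` is left complete in `B`: every `A ∈ B` admits a short exact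
sequence `0 → Y' → X' → A → 0` with `Y' ∈ Y`, `X' ∈ X`. -/
def LeftCompleteIn (B X Y : Set C) : Prop :=
  ∀ A ∈ B, ∃ (Y' X' : C) (i : Y' ⟶ X') (p : X' ⟶ A), Y' ∈ Y ∧ X' ∈ X ∧ IsShortExact i p

/-- The full subcategory determined by `B` is reflective in `C`:
the (fully faithful) inclusion functor has a left adjoint. -/
def IsReflectiveSub (B : Set C) : Prop :=
  (ObjectProperty.ι (· ∈ B)).IsRightAdjoint

/-- The full subcategory determined by `B` is coreflective in `C`:
the inclusion functor has a right adjoint. -/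
def IsCoreflectiveSub (B : Set C) : Prop :=
  (ObjectProperty.ι (· ∈ B)).IsLeftAdjoint

/-- `Ext²(V, A) = 0` (Yoneda `Ext²`): every `2`-fold extension
`0 → A —g→ X₁ —f→ X₀ —p→ V → 0` represents the trivial class, i.e. (by the standard
long-exact-sequence criterion) the extension `0 → A → X₁ → im f → 0` extends to an
extension of `X₀` by `A`. -/
def Ext2Zero (V A : C) : Prop :=
  ∀ (X1 X0 : C) (g : A ⟶ X1) (f : X1 ⟶ X0) (p : X0 ⟶ V)
    (w1 : g ≫ f = 0) (w2 : f ≫ p = 0),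
    Mono g → Epi p → (ShortComplex.mk g f w1).Exact → (ShortComplex.mk f p w2).Exact →
    ∃ (Y : C) (a : A ⟶ Y) (b : Y ⟶ X0), IsShortExact a b ∧
      ∃ φ : X1 ⟶ Y, g ≫ φ = a ∧ φ ≫ b = f

/-- `V` has projective dimension at most `1`: `Ext²(V, A) = 0` for every `A`. -/
def ProjDimLE1 (V : C) : Prop := ∀ A : C, Ext2Zero V A

/-- The "elements" of the (possibly large) Yoneda `Ext¹(X, Y)`: short exact sequences
`0 → Y → E → X → 0`. -/
def ExtElem (X Y : C) : Type (max u v) :=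
  Σ' (E : C) (i : Y ⟶ E) (p : E ⟶ X), IsShortExact i p

/-- Yoneda equivalence of extensions. -/
def extRel (X Y : C) : ExtElem X Y → ExtElem X Y → Prop :=
  fun e₁ e₂ => ∃ φ : e₁.1 ⟶ e₂.1, e₁.2.1 ≫ φ = e₂.2.1 ∧ φ ≫ e₂.2.2.1 = e₁.2.2.1

/-- The (possibly large) Yoneda `Ext¹(X, Y)`, as the quotient of the collection
of extensions by Yoneda equivalence. -/
def ExtClass (X Y : C) : Type (max u v) := Quot (extRel X Y)

/-- `Ext¹(A, B)` is a finitely generated (right) `End(A)`-module: there are `n : ℕ` and a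
short exact sequence `0 → B → X → A^n → 0` whose connecting map
`Hom(A, A^n) → Ext¹(A, B)` is surjective, i.e. every extension of `A` by `B` is a pullback
of the fixed one along some `h : A ⟶ A^n`. -/
def Ext1FGEnd (A B : C) : Prop :=
  ∃ (n : ℕ) (X : C) (u : B ⟶ X) (p : X ⟶ ⨁ (fun _ : Fin n => A)),
    IsShortExact u p ∧
    ∀ (E : C) (i : B ⟶ E) (q : E ⟶ A), IsShortExact i q →
      ∃ (h : A ⟶ ⨁ (fun _ : Fin n => A)) (φ : E ⟶ X), i ≫ φ = u ∧ φ ≫ p = q ≫ h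

/-- `∐¹_I f = 0`: for every `I`-indexed family of short exact sequences
`0 → Xᵢ → Yᵢ → fᵢ → 0`, the induced morphism `∐ Xᵢ → ∐ Yᵢ` between (existing)
coproducts is a monomorphism. -/
def CoprodDerivedZeroFam {I : Type v} (f : I → C) : Prop :=
  ∀ (X Y : I → C) (u : ∀ i, X i ⟶ Y i) (p : ∀ i, Y i ⟶ f i),
    (∀ i, IsShortExact (u i) (p i)) →
    ∀ (QX QY : C) (ιX : ∀ i, X i ⟶ QX) (ιY : ∀ i, Y i ⟶ QY) (uu : QX ⟶ QY),
      IsCoproductIn Set.univ X QX ιX → IsCoproductIn Set.univ Y QY ιY →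
      (∀ i, ιX i ≫ uu = u i ≫ ιY i) → Mono uu

/-- `∐¹_I V = 0` for the constant family at `V`. -/
def CoprodDerivedZero (I : Type v) (V : C) : Prop :=
  CoprodDerivedZeroFam (fun _ : I => V)

/-- Witness that the category `D` is `Hom`-finite: a commutative ring `R` together with an
`R`-linear structure on `D` for which all `Hom`-modules are finitely generated. -/
structure HomFiniteStruct (D : Type u) [Category.{v} D] [Preadditive D] :
    Type (max u (v + 1)) where
  R : Type v
  [commRing : CommRing R]
  [linear : CategoryTheory.Linear R D]
  homFinite : ∀ A B : D, Module.Finite R (A ⟶ B)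

/-- The category `D` is `Hom`-finite. -/
def HomFinite (D : Type u) [Category.{v} D] [Preadditive D] : Prop :=
  Nonempty (HomFiniteStruct D)

/-- `Q`, with injections `ι`, is a coproduct of the family `f` in an arbitrary category. -/
def IsCoproductCocone {D : Type u} [Category.{v} D] {I : Type w} (f : I → D) (Q : D)
    (ι : ∀ i, f i ⟶ Q) : Prop :=
  ∀ (Z : D) (g : ∀ i, f i ⟶ Z), ∃! h : Q ⟶ Z, ∀ i, ι i ≫ h = g i

/-- The category `D` satisfies (Ab.4): it has all (small) coproducts, and coproducts
of monomorphisms are monomorphisms (for abelian categories, the latter is equivalent to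
the exactness of coproducts). -/
def Ab4Type (D : Type u) [Category.{v} D] : Prop :=
  HasCoproducts.{v} D ∧
  ∀ (I : Type v) (X Y : I → D) (u : ∀ i, X i ⟶ Y i), (∀ i, Mono (u i)) →
    ∀ (QX QY : D) (ιX : ∀ i, X i ⟶ QX) (ιY : ∀ i, Y i ⟶ QY) (uu : QX ⟶ QY),
      IsCoproductCocone X QX ιX → IsCoproductCocone Y QY ιY →
      (∀ i, ιX i ≫ uu = u i ≫ ιY i) → Mono uu

/-- The category `D` satisfies (Ab.5): it has all (small) coproducts and directed
(filtered) colimits of monomorphisms are monomorphisms (for abelian categories the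
latter is equivalent to the exactness of directed colimits). -/
def Ab5Type (D : Type u) [Category.{v} D] : Prop :=
  HasCoproducts.{v} D ∧
  ∀ (J : Type v) [SmallCategory J] [IsFiltered J] (F G : J ⥤ D) (α : F ⟶ G),
    (∀ j, Mono (α.app j)) →
    ∀ (cF : Cocone F) (cG : Cocone G), IsColimit cF → IsColimit cG →
      ∀ m : cF.pt ⟶ cG.pt, (∀ j, cF.ι.app j ≫ m = α.app j ≫ cG.ι.app j) → Mono m

/-- A ring `S` is left coherent: every finitely generated left ideal is finitely
presented as a left `S`-module. -/
def LeftCoherentRing (S : Type u) [Ring S] : Prop :=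
  ∀ J : Submodule S S, J.FG → Module.FinitePresentation S J

/-- A ring `S` is right coherent: every finitely generated right ideal (i.e. finitely
generated left ideal of `Sᵐᵒᵖ`) is finitely presented as a right `S`-module. -/
def RightCoherentRing (S : Type u) [Ring S] : Prop :=
  ∀ J : Submodule Sᵐᵒᵖ Sᵐᵒᵖ, J.FG → Module.FinitePresentation Sᵐᵒᵖ J

end Paper

/-!
Under either hypothesis every object `A` has an `Add(V)`-precover and a universal extension
`0 → A → X → P → 0` with `P ∈ Add(V)`: in the (Ab.4) case `P` is the coproduct of one copy of `V`
per class in the set `Ext¹(V, A)`, in the `Hom`-finite case finitely many copies suffice.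

If `Gen(V) = V^{⊥₁}`, the middle term of a universal extension lies in `V^{⊥₁}`, so `Gen(V)` is
cogenerating; being closed under quotients, this kills `Ext²(V, -)`. The image of an
`Add(V)`-precover of `A` is the trace of `V` in `A`; it yields the torsion pair, and the kernel of
the precover lies in `V^{⊥₁} = Gen(V)`, which gives `Gen(V) = Pres(V)`. Conversely, under (3)
dimension shifting along `V^{(I)} ↠ A` gives `Gen(V) ⊆ V^{⊥₁}`, and for `A ∈ V^{⊥₁}` the quotient
of `A` by its trace admits neither morphisms nor extensions from `V`, hence vanishes.
-/

namespace Paper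

variable {C : Type u} [Category.{v} C]

section AddGen

variable {A Q V X Z : C}

lemma isCoproductIn_self (V : C) :
    IsCoproductIn Set.univ (fun _ : PUnit.{v + 1} => V) V (fun _ => 𝟙 V) where
  mem _ := trivial
  memQ := trivial
  desc _ _ g := ⟨g ⟨⟩, fun _ => Category.id_comp _, fun _ hy => by simpa using hy ⟨⟩⟩

lemma IsCoproductIn.hom_ext {I : Type v} {ι : I → (V ⟶ Q)}
    (hQ : IsCoproductIn Set.univ (fun _ : I => V) Q ι) {f g : Q ⟶ Z}
    (h : ∀ j, ι j ≫ f = ι j ≫ g) : f = g := by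
  obtain ⟨d, -, hd⟩ := hQ.desc Z trivial fun j => ι j ≫ g
  exact (hd f h).trans (hd g fun _ => rfl).symm

lemma mem_addIn_of_isCoproductIn {I : Type v} {ι : I → (V ⟶ Q)}
    (hQ : IsCoproductIn Set.univ (fun _ : I => V) Q ι) : Q ∈ addIn Set.univ V :=
  ⟨trivial, I, Q, ι, hQ, 𝟙 Q, 𝟙 Q, Category.id_comp _⟩

lemma self_mem_addIn (V : C) : V ∈ addIn Set.univ V :=
  mem_addIn_of_isCoproductIn (isCoproductIn_self V)

lemma mem_genIn_of_mem_addIn (hX : X ∈ addIn Set.univ V) (p : X ⟶ A) [Epi p] :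
    A ∈ genIn Set.univ V :=
  ⟨trivial, X, hX, p, inferInstance⟩

lemma addIn_subset_genIn : addIn Set.univ V ⊆ genIn Set.univ V :=
  fun _ hA => mem_genIn_of_mem_addIn hA (𝟙 _)

lemma mem_genIn_of_epi (hA : A ∈ genIn Set.univ V) (e : A ⟶ Z) [Epi e] :
    Z ∈ genIn Set.univ V := by
  obtain ⟨-, X, hX, p, hp⟩ := hA
  exact mem_genIn_of_mem_addIn hX (p ≫ e)

lemma genIn_subset_barGenIn : genIn Set.univ V ⊆ barGenIn Set.univ V :=
  fun A hA => ⟨trivial, A, hA, 𝟙 A, inferInstance⟩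

lemma isCoproductIn_sigma [HasCoproducts.{v} C] {I : Type v} (f : I → C) :
    IsCoproductIn Set.univ f (∐ f) (Sigma.ι f) where
  mem _ := trivial
  memQ := trivial
  desc _ _ g := ⟨Sigma.desc g, by simp, fun h hh => Sigma.hom_ext _ _ fun j => by simp [hh]⟩

lemma isPrecover_addIn {u : Q ⟶ A} (hQ : Q ∈ addIn Set.univ V)
    (hfac : ∀ f : V ⟶ A, ∃ f' : V ⟶ Q, f' ≫ u = f) : IsPrecover (addIn Set.univ V) u := by
  refine ⟨hQ, fun X hX g => ?_⟩
  obtain ⟨-, I, P, ι, hP, s, r, hsr⟩ := hX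
  choose f hf using fun j => hfac (ι j ≫ r ≫ g)
  obtain ⟨d, hd, -⟩ := hP.desc Q trivial f
  refine ⟨s ≫ d, ?_⟩
  rw [Category.assoc, ← Category.id_comp g, ← hsr, Category.assoc s r g]
  exact congrArg (s ≫ ·) (hP.hom_ext fun j => by rw [reassoc_of% hd, hf])

lemma precoveringIn_addIn_of_hasCoproducts [HasCoproducts.{v} C] (V : C) :
    PrecoveringIn Set.univ (addIn Set.univ V) := fun A _ =>
  ⟨_, Sigma.desc fun f => f,
    isPrecover_addIn (mem_addIn_of_isCoproductIn (isCoproductIn_sigma fun _ : (V ⟶ A) => V))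
    fun f => ⟨Sigma.ι (fun _ : (V ⟶ A) => V) f, by simp⟩⟩

end AddGen

variable [Abelian C]

section ShortExact

variable {A B E F K T V W X Y : C}

namespace IsShortExact

variable {i : A ⟶ E} {p : E ⟶ B}

lemma w (h : IsShortExact i p) : i ≫ p = 0 := h.1

lemma shortExact (h : IsShortExact i p) : (ShortComplex.mk i p h.w).ShortExact := h.2

lemma mono (h : IsShortExact i p) : Mono i := h.shortExact.mono_f

lemma epi (h : IsShortExact i p) : Epi p := h.shortExact.epi_g

lemma exists_lift (h : IsShortExact i p) (k : T ⟶ E) (hk : k ≫ p = 0) :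
    ∃ l : T ⟶ A, l ≫ i = k :=
  have := h.mono
  h.shortExact.exact.lift' k hk

lemma exists_desc (h : IsShortExact i p) (k : E ⟶ T) (hk : i ≫ k = 0) :
    ∃ l : B ⟶ T, p ≫ l = k :=
  have := h.epi
  h.shortExact.exact.desc' k hk

lemma exists_section_of_retraction (h : IsShortExact i p) {r : E ⟶ A} (hr : i ≫ r = 𝟙 A) :
    ∃ s : B ⟶ E, s ≫ p = 𝟙 B := by
  obtain ⟨s, hs⟩ := h.exists_desc (𝟙 E - r ≫ i) (by simp [reassoc_of% hr])
  have := h.epi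
  refine ⟨s, ?_⟩
  rw [← cancel_epi p, reassoc_of% hs]
  simp [h.w]

lemma epi_of_eq_zero (h : IsShortExact i p) (hp : p = 0) : Epi i :=
  h.shortExact.exact.epi_f hp

end IsShortExact

lemma isShortExact_of_lift {i : A ⟶ E} {p : E ⟶ B} [Mono i] [Epi p] (hw : i ≫ p = 0)
    (hlift : ∀ {T : C} (k : T ⟶ E), k ≫ p = 0 → ∃ l : T ⟶ A, l ≫ i = k) :
    IsShortExact i p := by
  refine ⟨hw, ShortComplex.ShortExact.mk' ?_ inferInstance inferInstance⟩
  exact ShortComplex.exact_of_f_is_kernel _ <|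
    KernelFork.IsLimit.ofι _ _ (fun k hk => (hlift k hk).choose)
      (fun k hk => (hlift k hk).choose_spec)
      (fun k hk l hl => by rw [← cancel_mono i, hl, (hlift k hk).choose_spec])

lemma isShortExact_of_desc {i : A ⟶ E} {p : E ⟶ B} [Mono i] [Epi p] (hw : i ≫ p = 0)
    (hdesc : ∀ {T : C} (k : E ⟶ T), i ≫ k = 0 → ∃ l : B ⟶ T, p ≫ l = k) :
    IsShortExact i p := by
  refine ⟨hw, ShortComplex.ShortExact.mk' ?_ inferInstance inferInstance⟩
  exact ShortComplex.exact_of_g_is_cokernel _ <|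
    CokernelCofork.IsColimit.ofπ _ _ (fun k hk => (hdesc k hk).choose)
      (fun k hk => (hdesc k hk).choose_spec)
      (fun k hk l hl => by rw [← cancel_epi p, hl, (hdesc k hk).choose_spec])

lemma isShortExact_kernel (f : E ⟶ B) [Epi f] : IsShortExact (kernel.ι f) f :=
  ⟨_, ShortComplex.ShortExact.mk' (ShortComplex.exact_kernel f) inferInstance inferInstance⟩

lemma isShortExact_cokernel (f : A ⟶ E) [Mono f] : IsShortExact f (cokernel.π f) :=
  ⟨_, ShortComplex.ShortExact.mk' (ShortComplex.exact_cokernel f) inferInstance inferInstance⟩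

namespace IsShortExact

lemma exists_isPushout {i : A ⟶ E} {p : E ⟶ B} (h : IsShortExact i p) (f : A ⟶ X) :
    ∃ (E' : C) (i' : X ⟶ E') (p' : E' ⟶ B) (g : E ⟶ E'),
      IsShortExact i' p' ∧ IsPushout i f g i' ∧ g ≫ p' = p := by
  have := h.mono
  have hpo := IsPushout.of_hasPushout i f
  let p' := hpo.desc p 0 (by rw [h.w, comp_zero])
  have hinl : pushout.inl i f ≫ p' = p := hpo.inl_desc ..
  have hinr : pushout.inr i f ≫ p' = 0 := hpo.inr_desc ..
  have := h.epi
  have : Epi p' := epi_of_epi_fac hinl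
  refine ⟨_, _, p', _, isShortExact_of_desc hinr fun k hk => ?_, hpo, hinl⟩
  obtain ⟨l, hl⟩ := h.exists_desc (pushout.inl i f ≫ k) (by rw [hpo.w_assoc, hk, comp_zero])
  exact ⟨l, hpo.hom_ext (by rw [reassoc_of% hinl, hl]) (by rw [reassoc_of% hinr, zero_comp, hk])⟩

lemma exists_isPullback {i : A ⟶ E} {p : E ⟶ B} (h : IsShortExact i p) (t : X ⟶ B) :
    ∃ (E' : C) (i' : A ⟶ E') (p' : E' ⟶ X) (g : E' ⟶ E),
      IsShortExact i' p' ∧ IsPullback g p' p t ∧ i' ≫ g = i := by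
  have := h.epi
  have hpb := IsPullback.of_hasPullback p t
  let i' := hpb.lift i 0 (by rw [h.w, zero_comp])
  have hfst : i' ≫ pullback.fst p t = i := hpb.lift_fst ..
  have hsnd : i' ≫ pullback.snd p t = 0 := hpb.lift_snd ..
  have := h.mono
  have : Mono i' := mono_of_mono_fac hfst
  refine ⟨_, i', _, _, isShortExact_of_lift hsnd fun k hk => ?_, hpb, hfst⟩
  obtain ⟨l, hl⟩ := h.exists_lift (k ≫ pullback.fst p t)
    (by rw [Category.assoc, hpb.w, reassoc_of% hk, zero_comp])
  exact ⟨l, hpb.hom_ext (by rw [Category.assoc, hfst, hl])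
    (by rw [Category.assoc, hsnd, comp_zero, hk])⟩

lemma isIso_of_ladder {i₁ : A ⟶ E} {p₁ : E ⟶ B} {i₂ : A ⟶ F} {p₂ : F ⟶ B}
    (h₁ : IsShortExact i₁ p₁) (h₂ : IsShortExact i₂ p₂) {φ : E ⟶ F}
    (hi : i₁ ≫ φ = i₂) (hp : φ ≫ p₂ = p₁) : IsIso φ :=
  ShortComplex.isIso₂_of_shortExact_of_isIso₁₃'
    (⟨𝟙 A, φ, 𝟙 B, by simp [hi], by simp [hp]⟩ :
      ShortComplex.mk i₁ p₁ h₁.w ⟶ ShortComplex.mk i₂ p₂ h₂.w)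
    h₁.shortExact h₂.shortExact (by dsimp; infer_instance) (by dsimp; infer_instance)

lemma isPushout_of_ladder {e : A ⟶ W} {q : W ⟶ B} {a : X ⟶ F} {b : F ⟶ B}
    (h₁ : IsShortExact e q) (h₂ : IsShortExact a b) {u : A ⟶ X} {g : W ⟶ F}
    (hcomm : e ≫ g = u ≫ a) (hq : g ≫ b = q) : IsPushout e u g a := by
  obtain ⟨E', i', p', g', h', hpo, hg'⟩ := h₁.exists_isPushout u
  let Φ := hpo.desc g a hcomm
  have hΦb : Φ ≫ b = p' := hpo.hom_ext (by rw [hpo.inl_desc_assoc, hq, hg'])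
    (by rw [hpo.inr_desc_assoc, h₂.w, h'.w])
  have := h'.isIso_of_ladder h₂ (hpo.inr_desc ..) hΦb
  exact hpo.of_iso (Iso.refl _) (Iso.refl _) (Iso.refl _) (asIso Φ) (by simp) (by simp)
    (by simp [Φ]) (by simp [Φ])

/-- The third isomorphism theorem `(F/A)/(X/A) ≅ F/X`, for `A ⊆ X ⊆ F`. -/
lemma exists_cokernel_comp {u : A ⟶ X} {p : X ⟶ B} {a : X ⟶ F} {b : F ⟶ V}
    (h₁ : IsShortExact u p) (h₂ : IsShortExact a b) :
    ∃ (w : B ⟶ cokernel (u ≫ a)) (π : cokernel (u ≫ a) ⟶ V),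
      p ≫ w = a ≫ cokernel.π (u ≫ a) ∧ cokernel.π (u ≫ a) ≫ π = b ∧ IsShortExact w π := by
  have := h₁.mono
  have := h₂.mono
  have hc := isShortExact_cokernel (u ≫ a)
  obtain ⟨w, hw⟩ := h₁.exists_desc (a ≫ cokernel.π (u ≫ a))
    (by rw [← Category.assoc, cokernel.condition])
  let π := cokernel.desc (u ≫ a) b (by simp [h₂.w])
  have hπ : cokernel.π (u ≫ a) ≫ π = b := cokernel.π_desc ..
  have := h₂.epi
  have : Epi π := epi_of_epi_fac hπ
  have := h₁.epi
  have hwπ : w ≫ π = 0 := by rw [← cancel_epi p, reassoc_of% hw, hπ, h₂.w, comp_zero]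
  have : Mono w := Preadditive.mono_of_cancel_zero _ fun z hz => by
    obtain ⟨T, e, _, x, hx⟩ := surjective_up_to_refinements_of_epi p z
    obtain ⟨y, hy⟩ := hc.exists_lift (x ≫ a) (by rw [Category.assoc, ← hw, ← reassoc_of% hx, hz,
      comp_zero])
    have hxy : x = y ≫ u := by rw [← cancel_mono a, Category.assoc, hy]
    rw [← cancel_epi e, hx, hxy, Category.assoc, h₁.w, comp_zero, comp_zero]
  refine ⟨w, π, hw, hπ, isShortExact_of_desc hwπ fun k hk => ?_⟩
  obtain ⟨l, hl⟩ := h₂.exists_desc (cokernel.π (u ≫ a) ≫ k)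
    (by rw [← reassoc_of% hw, hk, comp_zero])
  exact ⟨l, by rw [← cancel_epi (cokernel.π (u ≫ a)), reassoc_of% hπ, hl]⟩

lemma of_ladder {k : K ⟶ X} {π : X ⟶ A} {a : K ⟶ Y} {b : Y ⟶ E} {i : A ⟶ E} {q : E ⟶ V}
    (h₁ : IsShortExact k π) (h₂ : IsShortExact a b) (h₃ : IsShortExact i q) {φ : X ⟶ Y}
    (hk : k ≫ φ = a) (hφ : φ ≫ b = π ≫ i) : IsShortExact φ (b ≫ q) := by
  have := h₂.mono
  have := h₃.mono
  have := h₁.epi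
  have := h₂.epi
  have := h₃.epi
  have : Mono φ := Preadditive.mono_of_cancel_zero _ fun x hx => by
    obtain ⟨y, rfl⟩ := h₁.exists_lift x (by rw [← cancel_mono i, Category.assoc, ← hφ,
      reassoc_of% hx, zero_comp, zero_comp])
    have hy : y = 0 := by rw [← cancel_mono a, zero_comp, ← hk, ← Category.assoc, hx]
    rw [hy, zero_comp]
  refine isShortExact_of_desc (by rw [reassoc_of% hφ, h₃.w, comp_zero]) fun t ht => ?_
  obtain ⟨t', rfl⟩ := h₂.exists_desc t (by rw [← hk, Category.assoc, ht, comp_zero])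
  obtain ⟨l, rfl⟩ := h₃.exists_desc t' (by rw [← cancel_epi π, ← reassoc_of% hφ, ht, comp_zero])
  exact ⟨l, by simp⟩

end IsShortExact

end ShortExact

section Ext1Zero

variable {A B E K V X Q : C}

lemma mem_rightPerp_univ : A ∈ rightPerp Set.univ V ↔ Ext1Zero V A :=
  ⟨And.right, fun h => ⟨trivial, h⟩⟩

lemma ext1Zero_of_split
    (h : ∀ {E : C} (i : A ⟶ E) (p : E ⟶ V), IsShortExact i p → ∃ r : E ⟶ A, i ≫ r = 𝟙 A) :
    Ext1Zero V A :=
  fun _ _ i p hse => h i p hse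

namespace Ext1Zero

lemma split (h : Ext1Zero V A) {i : A ⟶ E} {p : E ⟶ V} (hse : IsShortExact i p) :
    ∃ r : E ⟶ A, i ≫ r = 𝟙 A :=
  h E trivial i p hse

lemma exists_section (h : Ext1Zero V A) {i : A ⟶ E} {p : E ⟶ V} (hse : IsShortExact i p) :
    ∃ s : V ⟶ E, s ≫ p = 𝟙 V :=
  hse.exists_section_of_retraction (h.split hse).choose_spec

lemma exists_extension (h : Ext1Zero V X) {i : A ⟶ E} {p : E ⟶ V} (hse : IsShortExact i p)
    (f : A ⟶ X) : ∃ g : E ⟶ X, i ≫ g = f := by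
  obtain ⟨E', i', p', g, hse', hpo, -⟩ := hse.exists_isPushout f
  obtain ⟨r, hr⟩ := h.split hse'
  exact ⟨g ≫ r, by rw [hpo.w_assoc, hr, Category.comp_id]⟩

lemma exists_lift (h : Ext1Zero V A) {i : A ⟶ E} {p : E ⟶ B} (hse : IsShortExact i p)
    (g : V ⟶ B) : ∃ l : V ⟶ E, l ≫ p = g := by
  obtain ⟨E', i', p', g', hse', hpb, -⟩ := hse.exists_isPullback g
  obtain ⟨s, hs⟩ := h.exists_section hse'
  exact ⟨s ≫ g', by rw [Category.assoc, hpb.w, reassoc_of% hs]⟩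

lemma of_retract (h : Ext1Zero V Q) (s : A ⟶ Q) (r : Q ⟶ A) (hsr : s ≫ r = 𝟙 A) :
    Ext1Zero V A :=
  ext1Zero_of_split fun _ _ hse => by
    obtain ⟨g, hg⟩ := h.exists_extension hse s
    exact ⟨g ≫ r, by rw [reassoc_of% hg, hsr]⟩

end Ext1Zero

/-- Dimension shifting: `Ext¹(V, X) → Ext¹(V, A) → Ext²(V, K)` is exact. -/
lemma ext1Zero_of_isShortExact {k : K ⟶ X} {π : X ⟶ A} (hse : IsShortExact k π)
    (hX : Ext1Zero V X) (hK : Ext2Zero V K) : Ext1Zero V A := by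
  refine ext1Zero_of_split fun i q hq => ?_
  have := hse.mono
  have := hse.epi
  have := hq.mono
  have := hq.epi
  have hex₁ : (ShortComplex.mk k (π ≫ i) (by rw [reassoc_of% hse.w, zero_comp])).Exact :=
    (ShortComplex.exact_iff_of_epi_of_isIso_of_mono
      (⟨𝟙 _, 𝟙 _, i, by simp, by simp⟩ :
        ShortComplex.mk k π hse.w ⟶ ShortComplex.mk k (π ≫ i) _)).1 hse.shortExact.exact
  have hex₂ : (ShortComplex.mk (π ≫ i) q (by rw [Category.assoc, hq.w, comp_zero])).Exact :=
    (ShortComplex.exact_iff_of_epi_of_isIso_of_mono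
      (⟨π, 𝟙 _, 𝟙 _, by simp, by simp⟩ :
        ShortComplex.mk (π ≫ i) q _ ⟶ ShortComplex.mk i q hq.w)).2 hq.shortExact.exact
  obtain ⟨Y, a, b, hab, φ, hk, hφ⟩ := hK X _ k (π ≫ i) q _ _ inferInstance inferInstance hex₁ hex₂
  obtain ⟨σ, hσ⟩ := hX.split (hse.of_ladder hab hq hk hφ)
  obtain ⟨r, hr⟩ := hab.exists_desc (σ ≫ π) (by rw [← hk, Category.assoc, reassoc_of% hσ, hse.w])
  exact ⟨r, by rw [← cancel_epi π, ← reassoc_of% hφ, hr, reassoc_of% hσ, Category.comp_id]⟩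

/-- `Hom(V, Q) → Hom(V, A) → Ext¹(V, K) → Ext¹(V, Q)` is exact. -/
lemma ext1Zero_of_isShortExact_of_fac {k : K ⟶ Q} {u : Q ⟶ A} (hse : IsShortExact k u)
    (hQ : Ext1Zero V Q) (hfac : ∀ f : V ⟶ A, ∃ f' : V ⟶ Q, f' ≫ u = f) : Ext1Zero V K := by
  refine ext1Zero_of_split fun κ q hκ => ?_
  obtain ⟨t, ht⟩ := hQ.exists_extension hκ k
  obtain ⟨f, hf⟩ := hκ.exists_desc (t ≫ u) (by rw [reassoc_of% ht, hse.w])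
  obtain ⟨f', rfl⟩ := hfac f
  obtain ⟨r, hr⟩ := hse.exists_lift (t - q ≫ f') (by rw [Preadditive.sub_comp, Category.assoc, hf,
    sub_self])
  have := hse.mono
  refine ⟨r, ?_⟩
  rw [← cancel_mono k, Category.assoc, hr, Preadditive.comp_sub, ht, reassoc_of% hκ.w, zero_comp,
    sub_zero, Category.id_comp]

end Ext1Zero

section AddPrecover

variable {A Q V X Z : C}

lemma eq_zero_of_mem_addIn (hX : X ∈ addIn Set.univ V) (f : X ⟶ Z)
    (hf : ∀ g : V ⟶ X, g ≫ f = 0) : f = 0 := by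
  obtain ⟨-, I, Q, ι, hQ, s, r, hsr⟩ := hX
  have hrf : r ≫ f = 0 := hQ.hom_ext fun j => by rw [← Category.assoc, hf, comp_zero]
  rw [← Category.id_comp f, ← hsr, Category.assoc, hrf, comp_zero]

lemma eq_zero_of_mem_genIn (hA : A ∈ genIn Set.univ V) (f : A ⟶ Z)
    (hV : ∀ g : V ⟶ Z, g = 0) : f = 0 := by
  obtain ⟨-, X, hX, p, hp⟩ := hA
  rw [← cancel_epi p, comp_zero]
  exact eq_zero_of_mem_addIn hX _ fun _ => hV _

lemma Ext1Zero.of_mem_addIn (hX : X ∈ addIn Set.univ V)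
    (hcop : ∀ (I : Type v) (Q : C) (ι : ∀ _ : I, V ⟶ Q),
      IsCoproductIn Set.univ (fun _ : I => V) Q ι → Ext1Zero V Q) : Ext1Zero V X := by
  obtain ⟨-, I, Q, ι, hQ, s, r, hsr⟩ := hX
  exact (hcop I Q ι hQ).of_retract s r hsr

lemma isCoproductIn_biproduct (V : C) (n : ℕ) :
    IsCoproductIn Set.univ (fun _ : ULift.{v} (Fin n) => V) (⨁ fun _ : Fin n => V)
      (fun j => biproduct.ι (fun _ : Fin n => V) j.down) where
  mem _ := trivial
  memQ := trivial
  desc _ _ g := ⟨biproduct.desc fun j => g ⟨j⟩, by simp,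
    fun h hh => biproduct.hom_ext' _ _ fun j => by simp [← hh ⟨j⟩]⟩

lemma precoveringIn_addIn_of_homFinite (hfin : HomFiniteStruct C) (V : C) :
    PrecoveringIn Set.univ (addIn Set.univ V) := fun A _ => by
  let := hfin.commRing
  let := hfin.linear
  have := hfin.homFinite V A
  obtain ⟨n, s, hs⟩ := Module.Finite.exists_fin (R := hfin.R) (M := V ⟶ A)
  refine ⟨_, biproduct.desc s,
    isPrecover_addIn (mem_addIn_of_isCoproductIn (isCoproductIn_biproduct V n)) fun f => ?_⟩
  obtain ⟨c, rfl⟩ := (Submodule.mem_span_range_iff_exists_fun hfin.R).1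
    (hs ▸ Submodule.mem_top : f ∈ Submodule.span hfin.R (Set.range s))
  exact ⟨∑ j, c j • biproduct.ι (fun _ : Fin n => V) j, by simp [Preadditive.sum_comp]⟩

end AddPrecover

section UniversalExtension

variable {A V X P : C}

/-- `u` kills `Ext¹(V, A) → Ext¹(V, X)`: it extends along every extension of `V` by `A`. -/
structure IsUniversalExtension (V : C) {A X P : C} (u : A ⟶ X) (p : X ⟶ P) : Prop where
  isShortExact : IsShortExact u p
  mem_addIn : P ∈ addIn Set.univ V
  extend : ∀ {E : C} (i : A ⟶ E) (q : E ⟶ V), IsShortExact i q → ∃ ψ : E ⟶ X, i ≫ ψ = u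

def HasUniversalExtensions (V : C) : Prop :=
  ∀ A : C, ∃ (X P : C) (u : A ⟶ X) (p : X ⟶ P), IsUniversalExtension V u p

/-- In `Ext¹(V, A) → Ext¹(V, X) → Ext¹(V, P)` the first map vanishes and the last group does. -/
lemma IsUniversalExtension.ext1Zero {u : A ⟶ X} {p : X ⟶ P} (hU : IsUniversalExtension V u p)
    (hP : Ext1Zero V P) : Ext1Zero V X := by
  refine ext1Zero_of_split fun a b hab => ?_
  obtain ⟨w, π, -, hπ, hwπ⟩ := hU.isShortExact.exists_cokernel_comp hab
  obtain ⟨s, hs⟩ := hP.exists_section hwπ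
  have := hU.isShortExact.mono
  have := hab.mono
  obtain ⟨W, e, q, g, hq, hpb, heg⟩ := (isShortExact_cokernel (u ≫ a)).exists_isPullback s
  obtain ⟨ψ, hψ⟩ := hU.extend e q hq
  have hpo : IsPushout e u g a :=
    hq.isPushout_of_ladder hab heg (by rw [← hπ, hpb.w_assoc, hs, Category.comp_id])
  exact ⟨hpo.desc ψ (𝟙 X) (by rw [hψ, Category.comp_id]), hpo.inr_desc ..⟩

lemma hasUniversalExtensions_of_ext1FGEnd (hfg : ∀ A : C, Ext1FGEnd V A) :
    HasUniversalExtensions V := fun A => by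
  obtain ⟨n, X, u, p, hse, hext⟩ := hfg A
  refine ⟨X, _, u, p, ⟨hse, mem_addIn_of_isCoproductIn (isCoproductIn_biproduct V n), ?_⟩⟩
  intro E i q hq
  obtain ⟨-, ψ, hψ, -⟩ := hext E i q hq
  exact ⟨ψ, hψ⟩

lemma extRel_equivalence (X Y : C) : Equivalence (extRel X Y) where
  refl _ := ⟨𝟙 _, Category.comp_id _, Category.id_comp _⟩
  symm := by
    rintro ⟨E₁, i₁, p₁, h₁⟩ ⟨E₂, i₂, p₂, h₂⟩ ⟨φ, hi, hp⟩
    have := h₁.isIso_of_ladder h₂ hi hp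
    exact ⟨inv φ, (IsIso.comp_inv_eq φ).2 hi.symm, (IsIso.inv_comp_eq φ).2 hp.symm⟩
  trans := by
    rintro _ _ _ ⟨φ, hi, hp⟩ ⟨ψ, hi', hp'⟩
    exact ⟨φ ≫ ψ, by rw [reassoc_of% hi, hi'], by rw [Category.assoc, hp', hp]⟩

section Coproducts

variable [HasCoproducts.{v} C]

lemma isShortExact_sigmaMap (hab4 : Ab4Type C) {J : Type v} {A E B : J → C}
    {i : ∀ j, A j ⟶ E j} {p : ∀ j, E j ⟶ B j} (h : ∀ j, IsShortExact (i j) (p j)) :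
    IsShortExact (Limits.Sigma.map i) (Limits.Sigma.map p) := by
  have : Mono (Limits.Sigma.map i) := hab4.2 J A E i (fun j => (h j).mono) _ _ _ _ _
    (fun Z => (isCoproductIn_sigma A).desc Z trivial)
    (fun Z => (isCoproductIn_sigma E).desc Z trivial) (by simp)
  have : ∀ j, Epi (p j) := fun j => (h j).epi
  refine isShortExact_of_desc (Sigma.hom_ext _ _ fun j => by simp [reassoc_of% (h j).w])
    fun k hk => ?_
  choose l hl using fun j => (h j).exists_desc (Sigma.ι E j ≫ k) (by
    simpa using Sigma.ι A j ≫= hk)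
  exact ⟨Sigma.desc l, Sigma.hom_ext _ _ fun j => by simp [hl]⟩

end Coproducts

lemma hasUniversalExtensions_of_ab4 (hab4 : Ab4Type C)
    (hsmall : ∀ A : C, Small.{v} (ExtClass V A)) : HasUniversalExtensions V := fun A => by
  have := hab4.1
  have := hsmall A
  let J := Shrink.{v} (ExtClass V A)
  let rep : J → ExtElem V A := fun j => ((equivShrink _).symm j).out
  obtain ⟨X, u, p, g, hse, hpo, -⟩ :=
    (isShortExact_sigmaMap hab4 fun j => (rep j).2.2.2).exists_isPushout
      (Sigma.desc fun _ => 𝟙 A)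
  refine ⟨X, _, u, p, ⟨hse, mem_addIn_of_isCoproductIn (isCoproductIn_sigma _), ?_⟩⟩
  intro E i q hq
  let j : J := equivShrink _ (Quot.mk _ ⟨E, i, q, hq⟩)
  obtain ⟨φ, hφ, -⟩ : extRel V A ⟨E, i, q, hq⟩ (rep j) := by
    refine (extRel_equivalence V A).eqvGen_iff.1 (Quot.eq.1 ?_)
    have hj : (equivShrink (ExtClass V A)).symm j = Quot.mk _ ⟨E, i, q, hq⟩ :=
      Equiv.symm_apply_apply _ _
    exact hj.symm.trans (Quot.out_eq _).symm
  have hg : (rep j).2.1 ≫ Sigma.ι (fun j => (rep j).1) j ≫ g = u := by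
    simpa using Sigma.ι (fun _ : J => A) j ≫= hpo.w
  exact ⟨φ ≫ Sigma.ι (fun j => (rep j).1) j ≫ g, by rw [reassoc_of% hφ, hg]⟩

end UniversalExtension

section ProjDim

variable {A V X₀ X₁ : C}

lemma isShortExact_factorThruImage {g : A ⟶ X₁} {f : X₁ ⟶ X₀} {w : g ≫ f = 0} [Mono g]
    (hex : (ShortComplex.mk g f w).Exact) : IsShortExact g (Abelian.factorThruImage f) := by
  have hw : g ≫ Abelian.factorThruImage f = 0 := by simp [← cancel_mono (Abelian.image.ι f), w]
  refine ⟨hw, ShortComplex.ShortExact.mk' ?_ inferInstance inferInstance⟩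
  exact (ShortComplex.exact_iff_of_epi_of_isIso_of_mono
    (⟨𝟙 _, 𝟙 _, Abelian.image.ι f, by simp, by simp⟩ :
      ShortComplex.mk g _ hw ⟶ ShortComplex.mk g f w)).2 hex

lemma isShortExact_image_ι {f : X₁ ⟶ X₀} {p : X₀ ⟶ V} {w : f ≫ p = 0} [Epi p]
    (hex : (ShortComplex.mk f p w).Exact) : IsShortExact (Abelian.image.ι f) p := by
  have hw : Abelian.image.ι f ≫ p = 0 := by
    simp [← cancel_epi (Abelian.factorThruImage f), w]
  refine ⟨hw, ShortComplex.ShortExact.mk' ?_ inferInstance inferInstance⟩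
  exact (ShortComplex.exact_iff_of_epi_of_isIso_of_mono
    (⟨Abelian.factorThruImage f, 𝟙 _, 𝟙 _, by simp, by simp⟩ :
      ShortComplex.mk f p w ⟶ ShortComplex.mk _ p hw)).1 hex

/-- Given `0 → A → X₁ → X₀ → V → 0`, embed `X₁` into `U ∈ 𝒯`. As `U/A ∈ V^{⊥₁}`, the induced
map `X₁/A → U/A` extends to `X₀`, and pulling `0 → A → U → U/A → 0` back along this extension
trivialises the given `2`-extension. -/
lemma projDimLE1_of_cogeneratingIn {𝒯 : Set C} (hcog : CogeneratingIn Set.univ 𝒯)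
    (hquot : ∀ {U Z : C} (c : U ⟶ Z), U ∈ 𝒯 → Epi c → Z ∈ 𝒯)
    (hperp : ∀ U ∈ 𝒯, Ext1Zero V U) : ProjDimLE1 V := by
  intro A X₁ X₀ g f p w₁ w₂ _ _ hex₁ hex₂
  have hgh := isShortExact_factorThruImage hex₁
  have hmp := isShortExact_image_ι hex₂
  obtain ⟨U, hU, v, _⟩ := hcog X₁ trivial
  have hseU := isShortExact_cokernel (g ≫ v)
  obtain ⟨w, hw⟩ := hgh.exists_desc (v ≫ cokernel.π (g ≫ v))
    (by rw [← Category.assoc, cokernel.condition])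
  have hQ : Ext1Zero V (cokernel (g ≫ v)) := hperp _ (hquot (cokernel.π (g ≫ v)) hU inferInstance)
  obtain ⟨ψ, hψ⟩ := hQ.exists_extension hmp w
  obtain ⟨Y, a, b, g', hab, hpb, ha⟩ := hseU.exists_isPullback ψ
  have hf : v ≫ cokernel.π (g ≫ v) = f ≫ ψ := by
    rw [← Abelian.image.fac f, Category.assoc, hψ, hw]
  refine ⟨Y, a, b, hab, hpb.lift v f hf, hpb.hom_ext ?_ ?_, hpb.lift_snd ..⟩
  · rw [Category.assoc, hpb.lift_fst, ha]
  · rw [Category.assoc, hpb.lift_snd, w₁, hab.w]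

end ProjDim

section Tilting

variable {V : C}

lemma ext1Zero_of_mem_genIn (heq : genIn Set.univ V = rightPerp Set.univ V) {A : C}
    (hA : A ∈ genIn Set.univ V) : Ext1Zero V A :=
  mem_rightPerp_univ.1 (heq ▸ hA)

lemma genIn_eq_rightPerp_of_isTiltingIn (h : IsTiltingIn Set.univ V) :
    genIn Set.univ V = rightPerp Set.univ V := by
  obtain ⟨⟨-, -, -, hbar⟩, hcog⟩ := h
  rw [hbar, Set.inter_eq_right]
  intro A _
  obtain ⟨T, hT, f, hf⟩ := hcog A trivial
  exact ⟨trivial, T, hT, f, hf⟩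

/-- The image of an `Add(V)`-precover of `A` is the trace of `V` in `A`. -/
lemma exists_isShortExact_trace (hpre : PrecoveringIn Set.univ (addIn Set.univ V))
    (hgen : genIn Set.univ V ⊆ rightPerp Set.univ V) (A : C) :
    ∃ (T F : C) (i : T ⟶ A) (p : A ⟶ F),
      IsShortExact i p ∧ T ∈ genIn Set.univ V ∧ ∀ f : V ⟶ F, f = 0 := by
  obtain ⟨Q, u, hu⟩ := hpre A trivial
  have hT : Abelian.image u ∈ genIn Set.univ V :=
    mem_genIn_of_mem_addIn hu.mem (Abelian.factorThruImage u)
  have hse := isShortExact_cokernel (Abelian.image.ι u)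
  refine ⟨_, _, _, _, hse, hT, fun g => ?_⟩
  obtain ⟨l, rfl⟩ := (mem_rightPerp_univ.1 (hgen hT)).exists_lift hse g
  obtain ⟨l', rfl⟩ := hu.fac V (self_mem_addIn V) l
  have hu0 : u ≫ cokernel.π (Abelian.image.ι u) = 0 := by
    conv_lhs => arg 1; rw [← Abelian.image.fac u]
    rw [Category.assoc, cokernel.condition, comp_zero]
  rw [Category.assoc, hu0, comp_zero]

lemma isTorsionClassIn_genIn
    (htrace : ∀ A : C, ∃ (T F : C) (i : T ⟶ A) (p : A ⟶ F),
      IsShortExact i p ∧ T ∈ genIn Set.univ V ∧ ∀ f : V ⟶ F, f = 0) :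
    IsTorsionClassIn Set.univ (genIn Set.univ V) := by
  have hF : ∀ {F : C}, (∀ f : V ⟶ F, f = 0) →
      F ∈ {A ∈ Set.univ | ∀ X ∈ genIn Set.univ V, ∀ f : X ⟶ A, f = 0} :=
    fun hF => ⟨trivial, fun X hX f => eq_zero_of_mem_genIn hX f hF⟩
  refine ⟨_, rfl, Set.ext fun A => ⟨fun hA => ⟨trivial, fun Y hY f => hY.2 A hA f⟩,
    fun hA => ?_⟩, fun A _ => ?_⟩
  · obtain ⟨T, F, i, p, hse, hT, hF'⟩ := htrace A
    have := hse.epi_of_eq_zero (hA.2 F (hF hF') p)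
    exact mem_genIn_of_epi hT i
  · obtain ⟨T, F, i, p, hse, hT, hF'⟩ := htrace A
    exact ⟨T, F, i, p, hT, hF hF', hse⟩

lemma genIn_eq_presIn (hpre : PrecoveringIn Set.univ (addIn Set.univ V))
    (heq : genIn Set.univ V = rightPerp Set.univ V) : genIn Set.univ V = presIn Set.univ V := by
  refine Set.Subset.antisymm (fun A hA => ?_)
    fun A ⟨_, _, _, Y, hY, _, c, _, hc, _⟩ => mem_genIn_of_mem_addIn hY c
  obtain ⟨-, X, hX, q, hq⟩ := hA
  obtain ⟨Q, u, hu⟩ := hpre A trivial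
  obtain ⟨h, hh⟩ := hu.fac X hX q
  have : Epi u := epi_of_epi_fac hh
  have hse := isShortExact_kernel u
  have hQ : Ext1Zero V Q := ext1Zero_of_mem_genIn heq (addIn_subset_genIn hu.mem)
  have hK : kernel u ∈ genIn Set.univ V := heq ▸ mem_rightPerp_univ.2
    (ext1Zero_of_isShortExact_of_fac hse hQ fun f => hu.fac V (self_mem_addIn V) f)
  obtain ⟨-, K, hK, k, hk⟩ := hK
  refine ⟨trivial, K, hK, Q, hu.mem, k ≫ kernel.ι u, u, by simp, inferInstance, ?_⟩
  exact (ShortComplex.exact_iff_of_epi_of_isIso_of_mono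
    (⟨k, 𝟙 _, 𝟙 _, by simp, by simp⟩ :
      ShortComplex.mk (k ≫ kernel.ι u) u _ ⟶ ShortComplex.mk _ u hse.w)).2
    hse.shortExact.exact

lemma cogeneratingIn_genIn (huniv : HasUniversalExtensions V)
    (heq : genIn Set.univ V = rightPerp Set.univ V) :
    CogeneratingIn Set.univ (genIn Set.univ V) := fun A _ => by
  obtain ⟨X, P, u, p, hU⟩ := huniv A
  have hP : Ext1Zero V P := ext1Zero_of_mem_genIn heq (addIn_subset_genIn hU.mem_addIn)
  exact ⟨X, heq ▸ mem_rightPerp_univ.2 (hU.ext1Zero hP), u, hU.isShortExact.mono⟩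

lemma isTiltingIn_of_genIn_eq_rightPerp (hpre : PrecoveringIn Set.univ (addIn Set.univ V))
    (huniv : HasUniversalExtensions V) (heq : genIn Set.univ V = rightPerp Set.univ V) :
    IsTiltingIn Set.univ V :=
  ⟨⟨trivial, isTorsionClassIn_genIn (exists_isShortExact_trace hpre heq.subset),
    genIn_eq_presIn hpre heq, by rw [← heq, Set.inter_eq_right.2 genIn_subset_barGenIn]⟩,
    cogeneratingIn_genIn huniv heq⟩

lemma projDimLE1_of_genIn_eq_rightPerp (huniv : HasUniversalExtensions V)
    (heq : genIn Set.univ V = rightPerp Set.univ V) : ProjDimLE1 V :=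
  projDimLE1_of_cogeneratingIn (cogeneratingIn_genIn huniv heq)
    (fun c hU _ => mem_genIn_of_epi hU c) fun _ => ext1Zero_of_mem_genIn heq

lemma isZero_of_genIn_eq_rightPerp (heq : genIn Set.univ V = rightPerp Set.univ V) {A : C}
    (hhom : ∀ f : V ⟶ A, f = 0) (hext : Ext1Zero V A) : IsZero A :=
  (IsZero.iff_id_eq_zero A).2 <|
    eq_zero_of_mem_genIn (heq ▸ mem_rightPerp_univ.2 hext) (𝟙 A) hhom

lemma genIn_eq_rightPerp_of_projDimLE1 (hpre : PrecoveringIn Set.univ (addIn Set.univ V))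
    (hpd : ProjDimLE1 V)
    (hcop : ∀ (I : Type v) (Q : C) (ι : ∀ _ : I, V ⟶ Q),
      IsCoproductIn Set.univ (fun _ : I => V) Q ι → Ext1Zero V Q)
    (hzero : ∀ A : C, (∀ f : V ⟶ A, f = 0) → Ext1Zero V A → IsZero A) :
    genIn Set.univ V = rightPerp Set.univ V := by
  have hgen : genIn Set.univ V ⊆ rightPerp Set.univ V := fun A ⟨_, X, hX, q, _⟩ =>
    mem_rightPerp_univ.2 <|
      ext1Zero_of_isShortExact (isShortExact_kernel q) (Ext1Zero.of_mem_addIn hX hcop) (hpd _)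
  refine hgen.antisymm fun A hA => ?_
  obtain ⟨T, F, i, p, hse, hT, hF⟩ := exists_isShortExact_trace hpre hgen A
  have hF0 : IsZero F :=
    hzero F hF (ext1Zero_of_isShortExact hse (mem_rightPerp_univ.1 hA) (hpd T))
  have := hse.epi_of_eq_zero (hF0.eq_of_tgt _ _)
  exact mem_genIn_of_epi hT i

end Tilting

end Paper

-- `Ext1FGEnd` asks for finite generation over `End(A)`; in a `Hom`-finite category this is the
-- paper's `Ext¹`-finiteness over the ground ring.
namespace Stmt6

open Paper CategoryTheory CategoryTheory.Limits

variable {C : Type u} [Category.{v} C] [Abelian C]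

theorem statement6
    (hyp : ((∀ A B : C, Small.{v} (ExtClass A B)) ∧ Ab4Type C) ∨
           (HomFinite C ∧ ∀ A B : C, Ext1FGEnd A B))
    (V : C) :
    -- (1) ⇔ (2)
    (IsTiltingIn (Set.univ : Set C) V ↔ genIn Set.univ V = rightPerp Set.univ V) ∧
    -- (2) ⇔ (3)
    (genIn Set.univ V = rightPerp Set.univ V ↔
      (ProjDimLE1 V ∧
       (∀ (I : Type v) (Q : C) (ι : ∀ _ : I, V ⟶ Q),
          IsCoproductIn Set.univ (fun _ : I => V) Q ι → Ext1Zero V Q) ∧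
       (∀ A : C, (∀ f : V ⟶ A, f = 0) → Ext1Zero V A → Limits.IsZero A))) := by
  have hpre : PrecoveringIn Set.univ (addIn Set.univ V) := by
    rcases hyp with ⟨-, hab4⟩ | ⟨⟨hfin⟩, -⟩
    · have := hab4.1
      exact precoveringIn_addIn_of_hasCoproducts V
    · exact precoveringIn_addIn_of_homFinite hfin V
  have huniv : HasUniversalExtensions V := by
    rcases hyp with ⟨hsmall, hab4⟩ | ⟨-, hfg⟩
    · exact hasUniversalExtensions_of_ab4 hab4 (hsmall V)
    · exact hasUniversalExtensions_of_ext1FGEnd (hfg V)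
  refine ⟨⟨genIn_eq_rightPerp_of_isTiltingIn, isTiltingIn_of_genIn_eq_rightPerp hpre huniv⟩,
    fun heq => ⟨projDimLE1_of_genIn_eq_rightPerp huniv heq, fun _ _ _ hQ => ?_,
      fun _ => isZero_of_genIn_eq_rightPerp heq⟩,
    fun ⟨hpd, hcop, hzero⟩ => genIn_eq_rightPerp_of_projDimLE1 hpre hpd hcop hzero⟩
  exact ext1Zero_of_mem_genIn heq (addIn_subset_genIn (mem_addIn_of_isCoproductIn hQ))

end Stmt6
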